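/- arXiv:2005.08181 — 2 statements merged into one kernel-verified Lean document; each statement's English description precedes it below -/
import Mathlib

section
/- For every configuration W ⊆ K^E there exists F ⊆ E with |F| = dim_K (π_F(W))^{⋆2} = dim_K W^{⋆2} such that ψ_W is linearly contact equivalent to ψ_{π_F(W)}. In particular, ψ_W is equivalent to a polynomial in at most dim_K W^{⋆2} ≤ binomial(dim W + 1, 2) variables. -/
open MvPolynomial

/-- The `s`-fold Hadamard power of a subspace. -/
noncomputable def hadPow {K : Type*} [Field K] {ι : Type*}
    (W : Submodule K (ι → K)) (s : ℕ) : Submodule K (ι → K) :=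
  Submodule.span K {v | ∃ w : Fin s → (ι → K), (∀ i, w i ∈ W) ∧ v = ∏ i, w i}

/-- The coordinate projection `π_F : K^E → K^F` for `F ⊆ E`. -/
noncomputable def projF {K : Type*} [Field K] {E : Type*} (F : Set E) :
    (E → K) →ₗ[K] (F → K) :=
  LinearMap.funLeft K K (Subtype.val : F → E)

/-- The configuration polynomial `ψ_w = det((Σ_e x_e w^i_e w^j_e)_{i,j})`. -/
noncomputable def configPoly {K : Type*} [Field K] {ι : Type*} [Fintype ι] {r : ℕ}
    (w : Fin r → ι → K) : MvPolynomial ι K :=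
  Matrix.det (Matrix.of fun i j : Fin r => ∑ e, MvPolynomial.X e * MvPolynomial.C (w i e * w j e))

/-- Linear contact equivalence of polynomials. -/
def ContactEquiv {K : Type*} [Field K] {σ τ : Type*} [Fintype σ] [Fintype τ]
    (φ : MvPolynomial σ K) (ψ : MvPolynomial τ K) : Prop :=
  ∃ (p : ℕ) (f : σ ↪ Fin p) (g : τ ↪ Fin p) (lam : Kˣ) (M : Matrix (Fin p) (Fin p) K),
    IsUnit M.det ∧
    MvPolynomial.rename f φ =
      (lam : K) • MvPolynomial.aeval
        (fun i => ∑ j, MvPolynomial.C (M i j) * MvPolynomial.X j)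
        (MvPolynomial.rename g ψ)

/-! Let `V = W^{⋆2}`. The coordinate functionals `v ↦ v e` span `V^*`, so a subset `F ⊆ E` of them
is a basis of `V^*`; then `π_F : V → K^F` is an isomorphism and every coordinate is a fixed
combination `v e = ∑_{f ∈ F} A e f * v f` of the coordinates in `F`. The entries of the matrix
defining `ψ_W` are `∑_e x_e (w^i w^j)_e` with `w^i w^j ∈ V`, so the substitution
`y_f = ∑_e A e f * x_e` turns `ψ_{π_F W}` into `ψ_W`. Since `A f f' = δ_{f f'}` on `F`, this
substitution extends to an invertible (unipotent) linear change of all variables. -/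

open Module Submodule Pointwise

section HadamardSquare

variable {K : Type*} [Field K] {ι : Type*}

theorem hadPow_two_eq_mul (W : Submodule K (ι → K)) : hadPow W 2 = W * W := by
  rw [hadPow, Submodule.mul_def]
  congr 1
  ext v
  simp only [Set.mem_ofPred_eq, Set.mem_mul, SetLike.mem_coe]
  constructor
  · rintro ⟨u, hu, rfl⟩
    exact ⟨u 0, hu 0, u 1, hu 1, (Fin.prod_univ_two u).symm⟩
  · rintro ⟨a, ha, b, hb, rfl⟩
    exact ⟨![a, b], by simp [Fin.forall_fin_two, ha, hb], by simp [Fin.prod_univ_two]⟩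

theorem finrank_hadPow_two_span_le {r : ℕ} (w : Fin r → ι → K) :
    finrank K (hadPow (span K (Set.range w)) 2) ≤ (r + 1).choose 2 := by
  have hprod : Set.range w * Set.range w =
      Set.range (Sym2.lift ⟨fun i j => w i * w j, fun i j => mul_comm (w i) (w j)⟩) := by
    ext v
    simp only [Set.mem_mul, Set.mem_range]
    constructor
    · rintro ⟨_, ⟨i, rfl⟩, _, ⟨j, rfl⟩, rfl⟩
      exact ⟨s(i, j), rfl⟩
    · rintro ⟨q, rfl⟩
      induction q using Sym2.ind with
      | _ i j => exact ⟨w i, ⟨i, rfl⟩, w j, ⟨j, rfl⟩, rfl⟩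
  rw [hadPow_two_eq_mul, span_mul_span, hprod]
  calc finrank K (span K _) ≤ Fintype.card (Sym2 (Fin r)) := finrank_range_le_card _
    _ = (r + 1).choose 2 := by rw [Sym2.card, Fintype.card_fin]

theorem projF_eq_toLinearMap_pi (F : Set ι) :
    projF (K := K) F = (AlgHom.pi fun f : F => Pi.evalAlgHom K (fun _ : ι => K) f.val).toLinearMap :=
  rfl

theorem hadPow_two_map_projF (F : Set ι) (W : Submodule K (ι → K)) :
    hadPow (W.map (projF F)) 2 = (hadPow W 2).map (projF F) := by
  rw [hadPow_two_eq_mul, hadPow_two_eq_mul, projF_eq_toLinearMap_pi, Submodule.map_mul]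

end HadamardSquare

section CoordinateBasis

variable {K : Type*} [Field K] {E : Type*}

theorem exists_finset_projF_bijective [Finite E] (V : Submodule K (E → K)) :
    ∃ F : Finset E, Function.Bijective (projF (F : Set E) ∘ₗ V.subtype) := by
  let coord : E → Dual K V := fun e => LinearMap.proj e ∘ₗ V.subtype
  obtain ⟨b, -, -, hspan, hli⟩ :=
    exists_linearIndepOn_extension (linearIndepOn_empty K coord) (Set.empty_subset Set.univ)
  obtain ⟨F, rfl⟩ := b.toFinite.exists_finset_coe
  refine ⟨F, ?_⟩
  have hinj : Function.Injective (projF (F : Set E) ∘ₗ V.subtype) := by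
    rw [← LinearMap.ker_eq_bot, eq_bot_iff]
    intro v hv
    have hle : span K (coord '' F) ≤ LinearMap.ker (Dual.eval K V v) :=
      span_le.2 <| Set.image_subset_iff.2 fun f hf => congrFun (LinearMap.mem_ker.1 hv) ⟨f, hf⟩
    rw [mem_bot]
    ext e
    exact hle (hspan ⟨e, Set.mem_univ e, rfl⟩)
  have hcard : finrank K V = finrank K (↥(F : Set E) → K) :=
    le_antisymm (LinearMap.finrank_le_finrank_of_injective hinj) <| by
      rw [finrank_fintype_fun_eq_card, ← Subspace.dual_finrank_eq]
      exact hli.fintype_card_le_finrank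
  exact ⟨hinj, (LinearMap.injective_iff_surjective_of_finrank_eq_finrank hcard).1 hinj⟩

theorem exists_coeff_of_projF_bijective [DecidableEq E] {V : Submodule K (E → K)} {F : Finset E}
    (hF : Function.Bijective (projF (F : Set E) ∘ₗ V.subtype)) :
    ∃ A : E → ↥(F : Set E) → K, (∀ f f' : (F : Set E), A f f' = if f' = f then 1 else 0) ∧
      ∀ v ∈ V, ∀ e, v e = ∑ f : (F : Set E), A e f * v f := by
  let lift := (LinearEquiv.ofBijective _ hF).symm
  refine ⟨fun e f => (lift fun j => if f = j then 1 else 0 : E → K) e, fun f f' => ?_,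
    fun v hv e => ?_⟩
  · exact congrFun (LinearEquiv.ofBijective _ hF |>.apply_symm_apply _) f
  · have h := LinearMap.pi_apply_eq_sum_univ (LinearMap.proj e ∘ₗ V.subtype ∘ₗ lift.toLinearMap)
      (projF (F : Set E) v)
    have hv' : lift (projF (F : Set E) v) = ⟨v, hv⟩ := lift.apply_symm_apply (⟨v, hv⟩ : V)
    simp only [LinearMap.comp_apply, LinearEquiv.coe_coe] at h
    rw [hv'] at h
    simp only [smul_eq_mul, LinearMap.proj_apply, Submodule.subtype_apply, projF,
      LinearMap.funLeft_apply] at h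
    simpa only [mul_comm] using h

end CoordinateBasis

section ContactEquivalence

variable {K : Type*} [Field K]

theorem configPoly_eq_aeval {σ τ : Type*} [Fintype σ] [Fintype τ] {r : ℕ}
    (u : Fin r → σ → K) (w : Fin r → τ → K) (A : τ → σ → K)
    (h : ∀ i j e, w i e * w j e = ∑ s, A e s * (u i s * u j s)) :
    configPoly w = aeval (fun s => ∑ e, C (A e s) * X e) (configPoly u) := by
  rw [configPoly, configPoly, AlgHom.map_det]
  congr 1
  refine Matrix.ext fun i j => ?_
  simp only [AlgHom.mapMatrix_apply, Matrix.map_apply, Matrix.of_apply, map_sum, map_mul,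
    aeval_X, aeval_C, algebraMap_eq, h, Finset.sum_mul, Finset.mul_sum]
  rw [Finset.sum_comm]
  refine Finset.sum_congr rfl fun e _ => Finset.sum_congr rfl fun s _ => ?_
  ring

theorem exists_isUnit_det_rows_eq {E : Type*} [Fintype E] [DecidableEq E] (F : Finset E)
    (A : E → ↥(F : Set E) → K) (hA : ∀ f f' : (F : Set E), A f f' = if f' = f then 1 else 0) :
    ∃ M : Matrix E E K, IsUnit M.det ∧ ∀ (f : (F : Set E)) e, M f e = A e f := by
  let N : Matrix E E K := Matrix.of fun a e =>
    if h : a ∈ F ∧ e ∉ F then A e ⟨a, h.1⟩ else 0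
  have hN : N * N = 0 := by
    ext a c
    refine Finset.sum_eq_zero fun e _ => ?_
    by_cases he : e ∈ F <;> simp [N, he]
  refine ⟨1 + N, (Matrix.isUnit_iff_isUnit_det _).1 (IsNilpotent.isUnit_one_add ⟨2, by
    rw [pow_two, hN]⟩), fun f e => ?_⟩
  by_cases he : e ∈ F
  · have hN0 : N f e = 0 := by simp [N, he]
    rw [Matrix.add_apply, hN0, add_zero, hA ⟨e, he⟩ f, Matrix.one_apply]
    simp [Subtype.ext_iff, eq_comm]
  · have hfe : (f : E) ≠ e := fun h => he (h ▸ f.2)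
    simp [N, he, hfe]

theorem contactEquiv_of_eq_aeval {σ τ : Type*} [Fintype σ] [DecidableEq σ] [Fintype τ]
    (g : τ ↪ σ) (M : Matrix σ σ K) (hM : IsUnit M.det) {φ : MvPolynomial σ K}
    {ψ : MvPolynomial τ K} (h : φ = aeval (fun t => ∑ s, C (M (g t) s) * X s) ψ) :
    ContactEquiv φ ψ := by
  let e := Fintype.equivFin σ
  refine ⟨_, e.toEmbedding, g.trans e.toEmbedding, 1, M.submatrix e.symm e.symm,
    by rwa [Matrix.det_submatrix_equiv_self], ?_⟩
  rw [h, Units.val_one, one_smul, aeval_rename, ← AlgHom.comp_apply, comp_aeval]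
  congr 2
  funext t
  simp only [Function.comp_apply, map_sum, map_mul, rename_C, rename_X,
    Function.Embedding.trans_apply, Equiv.coe_toEmbedding, Matrix.submatrix_apply,
    Equiv.symm_apply_apply]
  exact Fintype.sum_equiv e _ _ fun s => by rw [e.symm_apply_apply]

end ContactEquivalence

/-- For every configuration `W ⊆ K^E` there is `F ⊆ E` with
`|F| = dim (π_F W)^{⋆2} = dim W^{⋆2}` such that `ψ_W ≃ ψ_{π_F(W)}`; in particular `ψ_W`
is equivalent to a polynomial in at most `dim W^{⋆2} ≤ (dim W + 1 choose 2)` variables. -/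
theorem exists_small_contact_representative {K : Type*} [Field K] {E : Type*} [Fintype E]
    [DecidableEq E] {r : ℕ} (W : Submodule K (E → K)) (w : Fin r → E → K)
    (hw : LinearIndependent K w) (hspan : Submodule.span K (Set.range w) = W) :
    (∃ F : Finset E,
      F.card = Module.finrank K (hadPow (W.map (projF (F : Set E))) 2) ∧
      F.card = Module.finrank K (hadPow W 2) ∧
      ContactEquiv (configPoly w) (configPoly (fun i => projF (F : Set E) (w i)))) ∧
    Module.finrank K (hadPow W 2) ≤ Nat.choose (Module.finrank K W + 1) 2 := by
  subst hspan
  refine ⟨?_, ?_⟩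
  · obtain ⟨F, hF⟩ := exists_finset_projF_bijective (hadPow (span K (Set.range w)) 2)
    obtain ⟨A, hA, hcoeff⟩ := exists_coeff_of_projF_bijective hF
    obtain ⟨M, hM, hrows⟩ := exists_isUnit_det_rows_eq F A hA
    have hcard : F.card = finrank K (↥(F : Set E) → K) := by simp
    have hmap : (hadPow (span K (Set.range w)) 2).map (projF (F : Set E)) = ⊤ := by
      rw [← range_subtype (hadPow _ 2), ← LinearMap.range_comp, LinearMap.range_eq_top.2 hF.2]
    have hmem : ∀ i j, w i * w j ∈ hadPow (span K (Set.range w)) 2 := fun i j => by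
      rw [hadPow_two_eq_mul]
      exact mul_mem_mul (subset_span ⟨i, rfl⟩) (subset_span ⟨j, rfl⟩)
    refine ⟨F, by rw [hadPow_two_map_projF, hmap, finrank_top, hcard],
      hcard.trans (LinearEquiv.ofBijective _ hF).finrank_eq.symm, ?_⟩
    refine contactEquiv_of_eq_aeval (Function.Embedding.subtype _) M hM ?_
    simp only [Function.Embedding.coe_subtype, hrows]
    exact configPoly_eq_aeval _ _ A fun i j => hcoeff _ (hmem i j)
  · rw [finrank_span_eq_card hw, Fintype.card_fin]
    exact finrank_hadPow_two_span_le w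
end

section
/- If W ⊆ K^E is a configuration whose second Hadamard power has dimension equal to dim W (i.e., r_W^2 = r_W = r), then ψ_W is linearly contact equivalent to the monomial x_1 x_2 ⋯ x_r. -/
open MvPolynomial

/-!
Pick coordinates `s` on which the projection of `W` is an isomorphism, and let `u` be the basis
of `W` with `u i (s j) = δ i j`. The squares `u i ⋆ u i` are `r` independent vectors of `W^{⋆2}`,
so when `dim W^{⋆2} = r` they span it; evaluating `u i ⋆ u j` at the coordinates `s` then shows
that it vanishes for `i ≠ j`. Hence the `u i` have disjoint supports, the matrix defining `ψ_u`
is diagonal, and `ψ_u = ∏ i, ∑ e, u i e ^ 2 * x e` is a product of linear forms that are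
independent (the `i`-th one has coefficient `δ i j` at `x (s j)`), so a linear change of variables
turns it into `x₁ ⋯ x_r`. Finally `ψ_w = det(B) ^ 2 * ψ_u` for the change of basis `w = B u`.
-/
open Matrix

theorem Matrix.exists_isUnit_submatrix_of_linearIndependent {K : Type*} [Field K]
    {m n : Type*} [Fintype m] [Fintype n] [DecidableEq m] (w : Matrix m n K)
    (hw : LinearIndependent K w) : ∃ s : m → n, IsUnit (w.submatrix id s) := by
  have hspan : Submodule.span K (Set.range w.col) = ⊤ := by
    apply Submodule.eq_top_of_finrank_eq
    rw [← rank_eq_finrank_span_cols, hw.rank_matrix, Module.finrank_fintype_fun_eq_card]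
  obtain ⟨κ, a, ha, haspan, hali⟩ := exists_linearIndependent' K w.col
  have : Finite κ := Finite.of_injective a ha
  have : Fintype κ := Fintype.ofFinite κ
  have hcard : Fintype.card m = Fintype.card κ := by
    rw [linearIndependent_iff_card_eq_finrank_span.mp hali, Set.finrank, haspan, hspan,
      finrank_top, Module.finrank_fintype_fun_eq_card]
  refine ⟨a ∘ Fintype.equivOfCardEq hcard, ?_⟩
  rw [← linearIndependent_cols_iff_isUnit]
  exact hali.comp _ (Fintype.equivOfCardEq hcard).injective

section Pivot

variable {K : Type*} [Field K] {ι E : Type*} [DecidableEq ι]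
  {u : Matrix ι E K} {s : ι → E}

theorem Matrix.injective_of_submatrix_id_eq_one (hu : u.submatrix id s = 1) :
    Function.Injective s := by
  intro i j hij
  by_contra hne
  have h1 : u i (s i) = 1 := by simpa using congrFun₂ hu i i
  have h0 : u i (s j) = 0 := by simpa [one_apply_ne hne] using congrFun₂ hu i j
  rw [hij] at h1
  exact one_ne_zero (h1.symm.trans h0)

theorem Matrix.linearIndependent_of_submatrix_id_eq_one [Fintype ι]
    (hu : u.submatrix id s = 1) : LinearIndependent K u := by
  apply LinearIndependent.of_comp (LinearMap.funLeft K K s)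
  have : LinearMap.funLeft K K s ∘ u = (1 : Matrix ι ι K).row := by
    rw [← hu]; rfl
  rw [this]
  exact linearIndependent_rows_iff_isUnit.2 isUnit_one

theorem Matrix.vecMul_apply_of_submatrix_id_eq_one [Fintype ι] (hu : u.submatrix id s = 1)
    (c : ι → K) (j : ι) : (c ᵥ* u) (s j) = c j := by
  change (c ᵥ* u.submatrix id s) j = c j
  rw [hu, vecMul_one]

theorem Matrix.hadamard_self_submatrix_id_eq_one (hu : u.submatrix id s = 1) :
    (u ⊙ u).submatrix id s = 1 := by
  change u.submatrix id s ⊙ u.submatrix id s = 1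
  rw [hu, hadamard_one, diag_one]
  exact diagonal_one

end Pivot

theorem mul_mem_hadPow_two {K : Type*} [Field K] {E : Type*} {W : Submodule K (E → K)}
    {v v' : E → K} (hv : v ∈ W) (hv' : v' ∈ W) : v * v' ∈ hadPow W 2 :=
  Submodule.subset_span ⟨![v, v'], fun k => by fin_cases k <;> assumption,
    by rw [Fin.prod_univ_two]; rfl⟩

theorem mul_eq_zero_of_finrank_hadPow_two_le {K : Type*} [Field K] {ι E : Type*}
    [Fintype ι] [DecidableEq ι] [Fintype E] {W : Submodule K (E → K)} {u : Matrix ι E K}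
    {s : ι → E} (huW : ∀ i, u i ∈ W) (hu : u.submatrix id s = 1)
    (h2 : Module.finrank K (hadPow W 2) ≤ Fintype.card ι) {i j : ι} (hij : i ≠ j) :
    u i * u j = 0 := by
  have hsq := hadamard_self_submatrix_id_eq_one hu
  have hspan : Submodule.span K (Set.range (u ⊙ u)) = hadPow W 2 := by
    refine Submodule.eq_of_le_of_finrank_le ?_ ?_
    · rw [Submodule.span_le]
      rintro v ⟨k, rfl⟩
      exact mul_mem_hadPow_two (huW k) (huW k)
    · rwa [finrank_span_eq_card (linearIndependent_of_submatrix_id_eq_one hsq)]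
  obtain ⟨c, hc⟩ := (Submodule.mem_span_range_iff_exists_fun K).mp
    (hspan ▸ mul_mem_hadPow_two (huW i) (huW j))
  rw [← vecMul_eq_sum] at hc
  have hc0 : c = 0 := by
    ext m
    have h := congrFun hc (s m)
    have hum : ∀ k, u k (s m) = (1 : Matrix ι ι K) k m := fun k => congrFun₂ hu k m
    rw [vecMul_apply_of_submatrix_id_eq_one hsq, Pi.mul_apply, hum, hum] at h
    rw [h, Pi.zero_apply, one_apply, one_apply]
    split_ifs <;> simp_all
  rw [← hc, hc0, zero_vecMul]

section ConfigPoly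

variable {K : Type*} [Field K] {ι : Type*} [Fintype ι] {r : ℕ}

theorem configPoly_mul (B : Matrix (Fin r) (Fin r) K) (u : Matrix (Fin r) ι K) :
    configPoly (B * u) = C (B.det ^ 2) * configPoly u := by
  classical
  let c : K →+* MvPolynomial ι K := C
  let D : Matrix ι ι (MvPolynomial ι K) := diagonal X
  have hgram (v : Matrix (Fin r) ι K) : configPoly v = det (v.map c * D * (v.map c)ᵀ) :=
    congrArg det <| Matrix.ext fun i j => by
      simp [c, D, mul_apply, diagonal, C_mul, mul_comm, mul_left_comm]
  have hassoc : (B * u).map c * D * ((B * u).map c)ᵀ =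
      B.map c * (u.map c * D * (u.map c)ᵀ) * (B.map c)ᵀ := by
    simp only [Matrix.map_mul, transpose_mul, Matrix.mul_assoc]
  rw [hgram, hgram, hassoc, det_mul, det_mul, det_transpose,
    show (B.map c).det = C B.det from (c.map_det B).symm, map_pow]
  ring

theorem configPoly_eq_prod_of_mul_eq_zero (u : Matrix (Fin r) ι K)
    (hu : ∀ i j, i ≠ j → u i * u j = 0) :
    configPoly u = ∏ i, ∑ e, X e * C ((u ⊙ u) i e) := by
  have : of (fun i j => ∑ e, X e * C (u i e * u j e)) =
      diagonal fun i => ∑ e, (X e : MvPolynomial ι K) * C ((u ⊙ u) i e) := by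
    ext i j : 1
    obtain rfl | hij := eq_or_ne i j
    · simp
    · rw [of_apply, diagonal_apply_ne _ hij]
      refine Finset.sum_eq_zero fun e _ => ?_
      rw [show u i e * u j e = 0 from congrFun (hu i j hij) e, C_0, mul_zero]
  unfold configPoly
  rw [this, det_diagonal]

end ConfigPoly

theorem ContactEquiv.C_mul_left {K : Type*} [Field K] {σ τ : Type*} [Fintype σ] [Fintype τ]
    {φ : MvPolynomial σ K} {ψ : MvPolynomial τ K} (h : ContactEquiv φ ψ) {c : K} (hc : c ≠ 0) :
    ContactEquiv (C c * φ) ψ := by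
  obtain ⟨p, f, g, lam, M, hM, hφ⟩ := h
  refine ⟨p, f, g, Units.mk0 c hc * lam, M, hM, ?_⟩
  rw [map_mul, rename_C, hφ, Units.val_mul, Units.val_mk0, mul_smul, smul_eq_C_mul (_ • _)]

section Extension

variable {K : Type*} [Field K] {ι E : Type*} [Fintype ι] [DecidableEq ι]
  [Fintype E] [DecidableEq E]

theorem Matrix.exists_isUnit_det_submatrix_eq_of_submatrix_id_eq_one {b : Matrix ι E K}
    {s : ι → E} (hb : b.submatrix id s = 1) :
    ∃ M : Matrix E E K, IsUnit M.det ∧ M.submatrix s id = b := by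
  have hs := injective_of_submatrix_id_eq_one hb
  let M : Matrix E E K := Function.extend s b (1 : Matrix E E K)
  have hMs (i : ι) : M (s i) = b i := hs.extend_apply b (1 : Matrix E E K) i
  have hMe (e : E) (he : ¬∃ i, s i = e) : M e = (1 : Matrix E E K) e :=
    Function.extend_apply' _ _ _ he
  have hcol (e : E) (m : ι) : M e (s m) = (1 : Matrix E E K) e (s m) := by
    by_cases he : ∃ i, s i = e
    · obtain ⟨i, rfl⟩ := he
      rw [hMs]
      simpa [one_apply, hs.eq_iff] using congrFun₂ hb i m
    · rw [hMe e he]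
  -- `M - 1` vanishes on the columns `s m` and on the rows outside the image of `s`.
  have hN : (M - 1) * (M - 1) = 0 := by
    ext e e'
    rw [mul_apply]
    refine Finset.sum_eq_zero fun d _ => ?_
    by_cases hd : ∃ i, s i = d
    · obtain ⟨i, rfl⟩ := hd
      rw [sub_apply, hcol, sub_self, zero_mul]
    · rw [sub_apply M 1 d, hMe d hd, sub_self, mul_zero]
  refine ⟨M, ?_, funext hMs⟩
  rw [← isUnit_iff_isUnit_det]
  simpa using (IsNilpotent.isUnit_one_add ⟨2, by rw [pow_two, hN]⟩ : IsUnit (1 + (M - 1)))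

theorem contactEquiv_prod_sum_X_mul_C_of_submatrix_id_eq_one {b : Matrix ι E K} {s : ι → E}
    (hb : b.submatrix id s = 1) :
    ContactEquiv (∏ i, ∑ e, X e * C (b i e)) (∏ i, X i : MvPolynomial ι K) := by
  obtain ⟨M, hM, hMs⟩ := exists_isUnit_det_submatrix_eq_of_submatrix_id_eq_one hb
  let f := Fintype.equivFin E
  refine ⟨Fintype.card E, f.toEmbedding,
    ⟨f ∘ s, f.injective.comp (injective_of_submatrix_id_eq_one hb)⟩, 1, M.reindex f f,
    by rwa [det_reindex_self], ?_⟩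
  simp only [map_prod, map_sum, map_mul, rename_X, rename_C, aeval_X, Units.val_one, one_smul]
  refine Finset.prod_congr rfl fun i _ => ?_
  rw [← Equiv.sum_comp f]
  refine Finset.sum_congr rfl fun e _ => ?_
  simp [← hMs, mul_comm]

end Extension

theorem contact_equiv_monomial_general {K : Type*} [Field K] {E : Type*} [Fintype E] [DecidableEq E]
    {r : ℕ} (W : Submodule K (E → K)) (w : Fin r → E → K)
    (hw : LinearIndependent K w) (hspan : Submodule.span K (Set.range w) = W)
    (h2 : Module.finrank K (hadPow W 2) = r) :
    ContactEquiv (configPoly w) (∏ i : Fin r, MvPolynomial.X i : MvPolynomial (Fin r) K) := by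
  obtain ⟨s, hB⟩ := exists_isUnit_submatrix_of_linearIndependent (of w) hw
  set B := (of w).submatrix id s
  have hBdet : IsUnit B.det := (isUnit_iff_isUnit_det B).mp hB
  set u := B⁻¹ * of w
  have hu : u.submatrix id s = 1 := nonsing_inv_mul B hBdet
  have huW (i : Fin r) : u i ∈ W := by
    rw [← hspan]
    exact (range_vecMulLinear (of w)).le (LinearMap.mem_range_self _ (B⁻¹ i))
  have hdisj (i j : Fin r) (hij : i ≠ j) : u i * u j = 0 :=
    mul_eq_zero_of_finrank_hadPow_two_le huW hu (by rw [h2, Fintype.card_fin]) hij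
  have hwu : of w = B * u := by
    rw [← Matrix.mul_assoc, mul_nonsing_inv B hBdet, Matrix.one_mul]
  rw [show configPoly w = configPoly (B * u) from congrArg configPoly hwu, configPoly_mul,
    configPoly_eq_prod_of_mul_eq_zero u hdisj]
  exact (contactEquiv_prod_sum_X_mul_C_of_submatrix_id_eq_one
    (hadamard_self_submatrix_id_eq_one hu)).C_mul_left
    (pow_ne_zero 2 hBdet.ne_zero)

/-- If `dim W^{⋆2} = dim W = r`, then `ψ_W` is contact equivalent to `x_1 ⋯ x_r`. -/
theorem contact_equiv_monomial {K : Type*} [Field K] {E : Type*} [Fintype E] [DecidableEq E]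
    {r : ℕ} (W : Submodule K (E → K)) (w : Fin r → E → K)
    (hw : LinearIndependent K w) (hspan : Submodule.span K (Set.range w) = W)
    (h2 : Module.finrank K (hadPow W 2) = r) (h1 : Module.finrank K W = r) :
    ContactEquiv (configPoly w) (∏ i : Fin r, MvPolynomial.X i : MvPolynomial (Fin r) K) :=
  contact_equiv_monomial_general W w hw hspan h2
end
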